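/- Let V = λI + S where λ > 0 and S = [[Σ_qq, Σ_qp],[Σ_pq, Σ_pp]] is positive semidefinite, and suppose [[ρΣ_qq, Σ_qp],[Σ_pq, Σ_pp]] ⪰ 0 for some ρ ∈ (0,1). Let D be the block-diagonal projection matrix D = [[I_{d_q}, 0],[0, 0]]. Then D·V·D ⪯ (1/(1−ρ))·V. -/

import Mathlib

open Matrix

private lemma psd_smul {n : Type*} [Fintype n] {A : Matrix n n ℝ} (hA : A.PosSemidef)
    {c : ℝ} (hc : 0 ≤ c) : (c • A).PosSemidef := by
  constructor
  · show (c • A)ᴴ = c • A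
    rw [conjTranspose_smul, hA.1.eq]
    simp
  · intro x
    have h := mul_nonneg hc (hA.2 x)
    refine le_of_le_of_eq h ?_
    simp only [Finsupp.sum, Finset.mul_sum, Matrix.smul_apply, smul_eq_mul]
    exact Finset.sum_congr rfl fun i _ => Finset.sum_congr rfl fun j _ => by ring

/-- If `S = [[Σqq, Σqp],[Σpq, Σpp]]` is PSD, the `ρ`-modified matrix is PSD, `λ > 0`,
`V = λ I + S`, and `D` is the block projection onto the first coordinates, then
`D V D ⪯ (1/(1-ρ)) V` in the Loewner order. -/
theorem projected_design_matrix_loewner_bound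
    {dq dp : ℕ} (lam ρ : ℝ) (hlam : 0 < lam) (hρ : ρ ∈ Set.Ioo (0 : ℝ) 1)
    (Sqq : Matrix (Fin dq) (Fin dq) ℝ) (Sqp : Matrix (Fin dq) (Fin dp) ℝ)
    (Spq : Matrix (Fin dp) (Fin dq) ℝ) (Spp : Matrix (Fin dp) (Fin dp) ℝ)
    (hS : (Matrix.fromBlocks Sqq Sqp Spq Spp).PosSemidef)
    (hSρ : (Matrix.fromBlocks (ρ • Sqq) Sqp Spq Spp).PosSemidef)
    (V : Matrix (Fin dq ⊕ Fin dp) (Fin dq ⊕ Fin dp) ℝ)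
    (hV : V = lam • (1 : Matrix (Fin dq ⊕ Fin dp) (Fin dq ⊕ Fin dp) ℝ) +
      Matrix.fromBlocks Sqq Sqp Spq Spp)
    (D : Matrix (Fin dq ⊕ Fin dp) (Fin dq ⊕ Fin dp) ℝ)
    (hD : D = Matrix.fromBlocks (1 : Matrix (Fin dq) (Fin dq) ℝ) 0 0 0) :
    ((1 / (1 - ρ)) • V - D * V * D).PosSemidef := by
  obtain ⟨hρ0, hρ1⟩ := hρ
  have h1ρ : (0:ℝ) < 1 - ρ := by linarith
  set c : ℝ := 1 / (1 - ρ) with hc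
  have hc1 : 1 ≤ c := by rw [hc, le_div_iff₀ h1ρ]; linarith
  have hc0 : 0 < c := by positivity
  have hcρ : c * ρ = c - 1 := by rw [hc]; field_simp; ring
  have key : c • V - D * V * D =
      (lam * (c - 1)) • (1 : Matrix (Fin dq ⊕ Fin dp) (Fin dq ⊕ Fin dp) ℝ)
      + lam • Matrix.fromBlocks (0 : Matrix (Fin dq) (Fin dq) ℝ) 0 0 1
      + c • Matrix.fromBlocks (ρ • Sqq) Sqp Spq Spp := by
    subst hV hD
    ext i j
    rcases i with i | i <;> rcases j with j | j <;>
      simp [Matrix.mul_apply, Matrix.fromBlocks, Matrix.one_apply, Fintype.sum_sum_type] <;>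
      split_ifs <;> (try rw [hc]) <;> field_simp <;> ring
  rw [key]
  refine Matrix.PosSemidef.add (Matrix.PosSemidef.add ?_ ?_) (psd_smul hSρ hc0.le)
  · exact psd_smul Matrix.PosSemidef.one (by nlinarith : (0:ℝ) ≤ lam * (c - 1))
  · refine psd_smul ?_ hlam.le
    have : Matrix.fromBlocks (0 : Matrix (Fin dq) (Fin dq) ℝ) 0 0 (1 : Matrix (Fin dp) (Fin dp) ℝ)
        = (Matrix.fromBlocks 0 0 0 1) * (Matrix.fromBlocks (0 : Matrix (Fin dq) (Fin dq) ℝ) 0 0 1)ᴴ := by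
      simp [Matrix.fromBlocks_multiply, Matrix.fromBlocks_conjTranspose, Matrix.fromBlocks_transpose]
    rw [this]
    exact Matrix.posSemidef_self_mul_conjTranspose _
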